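/- arXiv:2409.03572 — 4 statements merged into one kernel-verified Lean document; each statement's English description precedes it below -/
import Mathlib

section
/- Let M be a nonempty closed subset of ℝ^N and Q a Borel probability measure on ℝ^N with finite second moment. Then the extrinsic mean set of Q, i.e., the set of minimizers over M of the Fréchet function F(x) = ∫ ‖x − y‖² dQ(y), is nonempty. -/
/-!
Writing `m = ∫ y ∂Q` for the mean of `Q`, the cross term in
`‖x - y‖² = ‖x - m‖² + 2⟪x - m, m - y⟫ + ‖m - y‖²` integrates to zero, so
`F x = ‖x - m‖² + F m`. The extrinsic means are therefore exactly the points of `M` nearest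
to `m`, and a nearest point exists because `M` is closed and `ℝ^N` is proper.
-/

open MeasureTheory
open scoped RealInnerProductSpace

section FrechetFunction

variable {E : Type*} [NormedAddCommGroup E] [InnerProductSpace ℝ E] [CompleteSpace E]
  [MeasurableSpace E] {μ : Measure E} [IsProbabilityMeasure μ]

theorem integral_norm_sub_sq_eq_norm_sub_integral_sq_add (hμ : MemLp id 2 μ) (x : E) :
    ∫ y, ‖x - y‖ ^ 2 ∂μ = ‖x - ∫ y, y ∂μ‖ ^ 2 + ∫ y, ‖(∫ z, z ∂μ) - y‖ ^ 2 ∂μ := by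
  set m := ∫ y, y ∂μ
  have hid : Integrable (fun y => y) μ := hμ.integrable one_le_two
  have hcentered : Integrable (fun y => m - y) μ := (integrable_const m).sub hid
  have hcross : Integrable (fun y => 2 * ⟪x - m, m - y⟫) μ :=
    (hcentered.const_inner (x - m)).const_mul 2
  have hsq : Integrable (fun y => ‖m - y‖ ^ 2) μ :=
    ((memLp_const m).sub hμ).integrable_norm_pow' (p := 2)
  have hrest : Integrable (fun y => 2 * ⟪x - m, m - y⟫ + ‖m - y‖ ^ 2) μ := hcross.add hsq
  have hexpand : (fun y => ‖x - y‖ ^ 2) =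
      fun y => ‖x - m‖ ^ 2 + (2 * ⟪x - m, m - y⟫ + ‖m - y‖ ^ 2) := by
    funext y
    rw [show x - y = (x - m) + (m - y) by abel, norm_add_sq_real]
    ring
  have hmean : ∫ y, ⟪x - m, m - y⟫ ∂μ = 0 := by
    rw [integral_inner hcentered, integral_sub (integrable_const m) hid]
    simp [m]
  rw [hexpand, integral_add (integrable_const _) hrest, integral_add hcross hsq,
    integral_const_mul, hmean]
  simp

end FrechetFunction

/-- For a nonempty closed subset `M ⊆ ℝ^N` and a Borel probability
measure `Q` on `ℝ^N` with finite second moment, the set of minimizers over `M` of the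
Fréchet function `F x = ∫ ‖x - y‖² ∂Q` (the extrinsic mean set) is nonempty. -/
theorem extrinsic_mean_set_nonempty
    {N : ℕ}
    (M : Set (EuclideanSpace ℝ (Fin N))) (hM : M.Nonempty) (hMc : IsClosed M)
    (Q : Measure (EuclideanSpace ℝ (Fin N))) [IsProbabilityMeasure Q]
    (h2 : Integrable (fun y => ‖y‖ ^ 2) Q) :
    ∃ p ∈ M, ∀ q ∈ M, (∫ y, ‖p - y‖ ^ 2 ∂Q) ≤ ∫ y, ‖q - y‖ ^ 2 ∂Q := by
  have hQ : MemLp id 2 Q := (memLp_two_iff_integrable_sq_norm aestronglyMeasurable_id).2 h2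
  obtain ⟨p, hpM, hp⟩ := hMc.exists_infDist_eq_dist hM (∫ y, y ∂Q)
  refine ⟨p, hpM, fun q hqM => ?_⟩
  have hpq : dist p (∫ y, y ∂Q) ≤ dist q (∫ y, y ∂Q) := by
    rw [dist_comm p, dist_comm q, ← hp]
    exact Metric.infDist_le_dist_of_mem hqM
  rw [dist_eq_norm, dist_eq_norm] at hpq
  rw [integral_norm_sub_sq_eq_norm_sub_integral_sq_add hQ p,
    integral_norm_sub_sq_eq_norm_sub_integral_sq_add hQ q]
  gcongr
end

section
/- Let M be a nonempty closed subset of ℝ^N, let X_1, X_2, … be i.i.d. integrable ℝ^N-valued random vectors with mean μ = E[X_1], and suppose μ has a unique nearest point p in M. Then almost surely the following holds: for every ε > 0 there exists N₀ such that for all n ≥ N₀, every point q ∈ M satisfying ‖ X̄_n − q ‖ = inf { ‖ X̄_n − r ‖ : r ∈ M }, where X̄_n = (1/n) Σ_{i=1}^n X_i, satisfies ‖q − p‖ < ε. In particular any choice of nearest points of the sample means converges almost surely to p, so the extrinsic sample mean is a consistent estimator of the extrinsic mean. -/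
/-!
By the strong law of large numbers `X̄ₙ → μ` almost surely, so it suffices that nearest
points depend upper semicontinuously on the base point at `μ`. A nearest point `q ∈ M` of
`x` is almost nearest to `μ`: `dist μ q ≤ infDist μ M + 2 dist x μ`. Since closed balls are
compact and `p` is the only nearest point of `μ`, the distance to `μ` is bounded away from
`infDist μ M` on the compact part of `M` near `μ` but outside `ball p ε`; so points of `M`
almost nearest to `μ` are close to `p`.
-/

open MeasureTheory Filter ProbabilityTheory Topology

namespace Metric

variable {α : Type*} [PseudoMetricSpace α]

theorem dist_le_infDist_add_two_mul_dist_of_dist_eq_infDist {s : Set α} {x y q : α}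
    (hq : dist x q = infDist x s) : dist y q ≤ infDist y s + 2 * dist x y :=
  calc dist y q ≤ dist x y + dist x q := by rw [dist_comm x y]; exact dist_triangle _ _ _
    _ = dist x y + infDist x s := by rw [hq]
    _ ≤ dist x y + (infDist y s + dist x y) := by gcongr; exact infDist_le_infDist_add_dist
    _ = infDist y s + 2 * dist x y := by ring

variable [ProperSpace α] {s : Set α} {y p : α}

theorem exists_pos_forall_dist_lt_of_unique_nearest (hs : IsClosed s)
    (hunique : ∀ q ∈ s, dist y q = infDist y s → q = p) {ε : ℝ} (hε : 0 < ε) :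
    ∃ η > 0, ∀ q ∈ s, dist y q < infDist y s + η → dist q p < ε := by
  set K := (s ∩ closedBall y (infDist y s + 1)) \ ball p ε
  have hK : IsCompact K := ((isCompact_closedBall y _).inter_left hs).diff isOpen_ball
  have hfar : ∀ b ∈ K, infDist y s < dist y b := by
    rintro b ⟨⟨hbs, -⟩, hbp⟩
    refine (infDist_le_dist_of_mem hbs).lt_of_ne fun hb => hbp ?_
    rw [hunique b hbs hb.symm]
    exact mem_ball_self hε
  obtain ⟨a, ha, haK⟩ :=
    hK.exists_forall_le' (continuous_const.dist continuous_id').continuousOn hfar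
  refine ⟨min 1 (a - infDist y s), lt_min one_pos (sub_pos.2 ha), fun q hqs hq => ?_⟩
  by_contra hqp
  have hqK : q ∈ K :=
    ⟨⟨hqs, mem_closedBall'.2 (by linarith [min_le_left 1 (a - infDist y s)])⟩,
      fun h => hqp (mem_ball.1 h)⟩
  linarith [haK q hqK, min_le_right 1 (a - infDist y s)]

theorem eventually_nhds_forall_dist_lt_of_unique_nearest (hs : IsClosed s)
    (hunique : ∀ q ∈ s, dist y q = infDist y s → q = p) {ε : ℝ} (hε : 0 < ε) :
    ∀ᶠ x in 𝓝 y, ∀ q ∈ s, dist x q = infDist x s → dist q p < ε := by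
  obtain ⟨η, hη, hnear⟩ := exists_pos_forall_dist_lt_of_unique_nearest hs hunique hε
  filter_upwards [ball_mem_nhds y (half_pos hη)] with x hx q hqs hq
  refine hnear q hqs ?_
  have := dist_le_infDist_add_two_mul_dist_of_dist_eq_infDist (y := y) hq
  linarith [mem_ball.1 hx]

end Metric

theorem extrinsic_sample_mean_consistent_general
    {N : ℕ} {Ω : Type*} [MeasureSpace Ω]
    (M : Set (EuclideanSpace ℝ (Fin N))) (hMc : IsClosed M)
    (X : ℕ → Ω → EuclideanSpace ℝ (Fin N))
    (hmeas : ∀ i, Measurable (X i))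
    (hindep : iIndepFun X ℙ)
    (hident : ∀ i, Measure.map (X i) ℙ = Measure.map (X 0) ℙ)
    (hint : Integrable (X 0) ℙ)
    (μ : EuclideanSpace ℝ (Fin N)) (hμ : μ = ∫ ω, X 0 ω)
    (p : EuclideanSpace ℝ (Fin N))
    (hunique : ∀ q ∈ M, dist μ q = Metric.infDist μ M → q = p) :
    ∀ᵐ ω : Ω, ∀ ε > (0 : ℝ), ∃ N₀ : ℕ, ∀ n ≥ N₀,
      ∀ q ∈ M,
        dist ((n : ℝ)⁻¹ • ∑ i ∈ Finset.range n, X i ω) q =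
          Metric.infDist ((n : ℝ)⁻¹ • ∑ i ∈ Finset.range n, X i ω) M →
        ‖q - p‖ < ε := by
  have hslln := strong_law_ae X hint (fun i j hij => hindep.indepFun hij)
    (fun i => ⟨(hmeas i).aemeasurable, (hmeas 0).aemeasurable, hident i⟩)
  filter_upwards [hslln] with ω hω
  rw [← hμ] at hω
  intro ε hε
  obtain ⟨N₀, hN₀⟩ := eventually_atTop.1
    (hω.eventually (Metric.eventually_nhds_forall_dist_lt_of_unique_nearest hMc hunique hε))
  exact ⟨N₀, fun n hn q hq hnear => by simpa [dist_eq_norm] using hN₀ n hn q hq hnear⟩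

/-- `M ⊆ ℝ^N` nonempty closed, `X₁, X₂, …` i.i.d. integrable random
vectors with mean `μ = E[X₁]` having a unique nearest point `p` in `M`.  Then almost
surely: for every `ε > 0`, eventually every nearest point `q ∈ M` of the sample mean
`X̄ₙ` satisfies `‖q - p‖ < ε`; hence any choice of nearest points of the sample means
converges a.s. to `p` (the extrinsic sample mean is a consistent estimator). -/
theorem extrinsic_sample_mean_consistent
    {N : ℕ} {Ω : Type*} [MeasureSpace Ω] [IsProbabilityMeasure (ℙ : Measure Ω)]
    (M : Set (EuclideanSpace ℝ (Fin N))) (hM : M.Nonempty) (hMc : IsClosed M)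
    (X : ℕ → Ω → EuclideanSpace ℝ (Fin N))
    (hmeas : ∀ i, Measurable (X i))
    (hindep : iIndepFun X ℙ)
    (hident : ∀ i, Measure.map (X i) ℙ = Measure.map (X 0) ℙ)
    (hint : Integrable (X 0) ℙ)
    (μ : EuclideanSpace ℝ (Fin N)) (hμ : μ = ∫ ω, X 0 ω)
    (p : EuclideanSpace ℝ (Fin N)) (hpM : p ∈ M)
    (hp : dist μ p = Metric.infDist μ M)
    (hunique : ∀ q ∈ M, dist μ q = Metric.infDist μ M → q = p) :
    ∀ᵐ ω : Ω, ∀ ε > (0 : ℝ), ∃ N₀ : ℕ, ∀ n ≥ N₀,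
      ∀ q ∈ M,
        dist ((n : ℝ)⁻¹ • ∑ i ∈ Finset.range n, X i ω) q =
          Metric.infDist ((n : ℝ)⁻¹ • ∑ i ∈ Finset.range n, X i ω) M →
        ‖q - p‖ < ε :=
  extrinsic_sample_mean_consistent_general M hMc X hmeas hindep hident hint μ hμ p hunique
end

section
/- Let X_1, …, X_n be unit vectors in ℂ^N and let K = (1/n) Σ_{i=1}^n X_i X_i* be the associated Hermitian matrix. Then the function u ↦ Σ_{i=1}^n ‖u u* − X_i X_i*‖_F² attains its minimum over unit vectors u ∈ ℂ^N, and a unit vector u is a minimizer if and only if u is an eigenvector of K whose eigenvalue equals the largest eigenvalue of K. (Hence the Veronese–Whitney extrinsic sample mean of [X_1], …, [X_n] is the projective point of an eigenvector of K corresponding to its largest eigenvalue.) -/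
open scoped ComplexConjugate

/-!
For unit vectors `u, x`, `‖u u* - x x*‖_F² = 2 - 2 |⟪x, u⟫|²`, so on the unit sphere
`f u = 2n (1 - re ⟪K u, u⟫)`: the minimizers of `f` are the maximizers of the Rayleigh quotient
of the self-adjoint operator `K = n⁻¹ ∑ᵢ |Xᵢ⟩⟨Xᵢ|`. A maximizer `w` exists by compactness and is
an eigenvector whose eigenvalue, its Rayleigh value, bounds every eigenvalue. Conversely an
eigenvector `u` for the top eigenvalue `η` has Rayleigh value `η ≥ re ⟪K w, w⟫`, so it is a
maximizer too.
-/

open Metric Matrix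
open scoped InnerProductSpace

namespace ContinuousLinearMap

variable {𝕜 E : Type*} [RCLike 𝕜] [NormedAddCommGroup E] [InnerProductSpace 𝕜 E]
  {T : E →L[𝕜] E}

theorem reApplyInnerSelf_of_apply_eq_smul {v : E} {ξ : ℝ} (hv : T v = (ξ : 𝕜) • v) :
    T.reApplyInnerSelf v = ξ * ‖v‖ ^ 2 := by
  rw [reApplyInnerSelf_apply, hv, inner_smul_left, inner_self_eq_norm_sq_to_K]
  simp only [RCLike.conj_ofReal, ← RCLike.ofReal_pow, ← RCLike.ofReal_mul, RCLike.ofReal_re]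

theorem le_reApplyInnerSelf_of_isMaxOn_sphere {u v : E} {ξ : ℝ}
    (hmax : IsMaxOn T.reApplyInnerSelf (sphere 0 1) u) (hv0 : v ≠ 0)
    (hv : T v = (ξ : 𝕜) • v) : ξ ≤ T.reApplyInnerSelf u := by
  have hvpos : 0 < ‖v‖ := norm_pos_iff.mpr hv0
  set w : E := ((‖v‖⁻¹ : ℝ) : 𝕜) • v
  have hw : ‖w‖ = 1 := by
    rw [norm_smul, RCLike.norm_ofReal, abs_inv, abs_norm, inv_mul_cancel₀ hvpos.ne']
  have hTw : T w = (ξ : 𝕜) • w := by rw [map_smul, hv, smul_comm]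
  calc ξ = T.reApplyInnerSelf w := by rw [reApplyInnerSelf_of_apply_eq_smul hTw, hw]; ring
    _ ≤ T.reApplyInnerSelf u := hmax (mem_sphere_zero_iff_norm.mpr hw)

theorem exists_isMaxOn_reApplyInnerSelf_sphere [ProperSpace E]
    (hne : (sphere (0 : E) 1).Nonempty) :
    ∃ w : E, ‖w‖ = 1 ∧ IsMaxOn T.reApplyInnerSelf (sphere 0 1) w := by
  obtain ⟨w, hw, hw_max⟩ := (isCompact_sphere (0 : E) 1).exists_isMaxOn hne
    T.reApplyInnerSelf_continuous.continuousOn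
  exact ⟨w, mem_sphere_zero_iff_norm.mp hw, hw_max⟩

end ContinuousLinearMap

namespace IsSelfAdjoint

variable {𝕜 E : Type*} [RCLike 𝕜] [NormedAddCommGroup E] [InnerProductSpace 𝕜 E]
  {T : E →L[𝕜] E}

theorem apply_eq_smul_of_isMaxOn_sphere [CompleteSpace E] (hT : IsSelfAdjoint T) {u : E}
    (hu : ‖u‖ = 1) (hmax : IsMaxOn T.reApplyInnerSelf (sphere 0 1) u) :
    T u = (T.reApplyInnerSelf u : 𝕜) • u := by
  have h := hT.eq_smul_self_of_isLocalExtrOn (x₀ := u) (Or.inr (hu ▸ hmax).localize)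
  rwa [ContinuousLinearMap.rayleighQuotient, hu, one_pow, div_one] at h

theorem isMaxOn_sphere_iff [ProperSpace E] (hT : IsSelfAdjoint T) {u : E}
    (hu : ‖u‖ = 1) :
    IsMaxOn T.reApplyInnerSelf (sphere 0 1) u ↔
      ∃ η : ℝ, T u = (η : 𝕜) • u ∧ ∀ ξ : ℝ, (∃ v, v ≠ 0 ∧ T v = (ξ : 𝕜) • v) → ξ ≤ η := by
  constructor
  · intro hmax
    refine ⟨_, hT.apply_eq_smul_of_isMaxOn_sphere hu hmax, ?_⟩
    rintro ξ ⟨v, hv0, hv⟩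
    exact T.le_reApplyInnerSelf_of_isMaxOn_sphere hmax hv0 hv
  · rintro ⟨η, hu_eig, hη⟩
    obtain ⟨w, hw, hw_max⟩ :=
      T.exists_isMaxOn_reApplyInnerSelf_sphere ⟨u, mem_sphere_zero_iff_norm.mpr hu⟩
    have hw_le : T.reApplyInnerSelf w ≤ η :=
      hη _ ⟨w, norm_ne_zero_iff.mp (hw.symm ▸ one_ne_zero),
        hT.apply_eq_smul_of_isMaxOn_sphere hw hw_max⟩
    have hu_val : T.reApplyInnerSelf u = η := by
      rw [T.reApplyInnerSelf_of_apply_eq_smul hu_eig, hu, one_pow, mul_one]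
    intro v hv
    exact (hw_max hv).trans (hu_val ▸ hw_le)

end IsSelfAdjoint

section Euclidean

variable {𝕜 ι : Type*} [RCLike 𝕜] [Fintype ι]

theorem EuclideanSpace.sum_norm_sq_mul_conj_sub (u x : EuclideanSpace 𝕜 ι) :
    ∑ j, ∑ k, ‖u j * conj (u k) - x j * conj (x k)‖ ^ 2 =
      ‖u‖ ^ 4 + ‖x‖ ^ 4 - 2 * ‖⟪x, u⟫_𝕜‖ ^ 2 := by
  set a : ι → 𝕜 := fun j => u j * conj (x j)
  have hterm : ∀ j k, ‖u j * conj (u k) - x j * conj (x k)‖ ^ 2 =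
      ‖u j‖ ^ 2 * ‖u k‖ ^ 2 + ‖x j‖ ^ 2 * ‖x k‖ ^ 2 - 2 * RCLike.re (conj (a j) * a k) := by
    intro j k
    rw [@norm_sub_sq 𝕜 𝕜, RCLike.inner_apply]
    simp only [a, norm_mul, RCLike.norm_conj, map_mul, RCLike.conj_conj]
    ring_nf
  have hinner : ⟪x, u⟫_𝕜 = ∑ j, a j := by
    simp [a, PiLp.inner_apply, RCLike.inner_apply]
  simp only [hterm, Finset.sum_sub_distrib, Finset.sum_add_distrib, ← Finset.mul_sum,
    ← Finset.sum_mul, ← map_sum]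
  rw [hinner, RCLike.conj_mul, ← RCLike.ofReal_pow, RCLike.ofReal_re,
    ← EuclideanSpace.norm_sq_eq, ← EuclideanSpace.norm_sq_eq]
  ring

theorem Matrix.toEuclideanCLM_of_mul_conj [DecidableEq ι] (x : EuclideanSpace 𝕜 ι) :
    Matrix.toEuclideanCLM (n := ι) (𝕜 := 𝕜) (Matrix.of fun j k => x j * conj (x k)) =
      InnerProductSpace.rankOne 𝕜 x x := by
  ext v j
  simp only [ofLp_toEuclideanCLM, InnerProductSpace.rankOne_apply, PiLp.smul_apply,
    PiLp.inner_apply, RCLike.inner_apply, mulVec, dotProduct, of_apply, smul_eq_mul,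
    Finset.sum_mul]
  exact Finset.sum_congr rfl fun k _ => by ring

theorem Matrix.toEuclideanCLM_apply_eq_smul_iff [DecidableEq ι] (A : Matrix ι ι 𝕜)
    (v : EuclideanSpace 𝕜 ι) (c : 𝕜) :
    Matrix.toEuclideanCLM (n := ι) (𝕜 := 𝕜) A v = c • v ↔ A *ᵥ v.ofLp = c • v.ofLp := by
  rw [← (WithLp.ofLp_injective 2).eq_iff, Matrix.ofLp_toEuclideanCLM, WithLp.ofLp_smul]

theorem Matrix.exists_mulVec_eq_smul_iff [DecidableEq ι] (A : Matrix ι ι 𝕜) (c : 𝕜) :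
    (∃ v : ι → 𝕜, v ≠ 0 ∧ A *ᵥ v = c • v) ↔
      ∃ v : EuclideanSpace 𝕜 ι, v ≠ 0 ∧ Matrix.toEuclideanCLM (n := ι) (𝕜 := 𝕜) A v = c • v := by
  simp only [Matrix.toEuclideanCLM_apply_eq_smul_iff]
  exact ⟨fun ⟨v, hv0, hv⟩ => ⟨WithLp.toLp 2 v, by simpa using hv0, hv⟩,
    fun ⟨v, hv0, hv⟩ => ⟨v.ofLp, by simpa using hv0, hv⟩⟩

end Euclidean

theorem InnerProductSpace.reApplyInnerSelf_rankOne_self {𝕜 E : Type*} [RCLike 𝕜]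
    [NormedAddCommGroup E] [InnerProductSpace 𝕜 E] (x u : E) :
    (rankOne 𝕜 x x).reApplyInnerSelf u = ‖⟪x, u⟫_𝕜‖ ^ 2 := by
  rw [ContinuousLinearMap.reApplyInnerSelf_apply, rankOne_apply, inner_smul_left,
    RCLike.conj_mul, ← RCLike.ofReal_pow, RCLike.ofReal_re]

theorem InnerProductSpace.reApplyInnerSelf_sum_rankOne_self {𝕜 E ι : Type*} [RCLike 𝕜]
    [NormedAddCommGroup E] [InnerProductSpace 𝕜 E] (s : Finset ι) (x : ι → E) (u : E) :
    (∑ i ∈ s, rankOne 𝕜 (x i) (x i)).reApplyInnerSelf u = ∑ i ∈ s, ‖⟪x i, u⟫_𝕜‖ ^ 2 := by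
  simp only [ContinuousLinearMap.reApplyInnerSelf_apply, _root_.sum_apply,
    sum_inner, map_sum]
  exact Finset.sum_congr rfl fun i _ => reApplyInnerSelf_rankOne_self (x i) u

/-- For unit vectors `X₁, …, Xₙ ∈ ℂ^N` and `K = (1/n) Σᵢ Xᵢ Xᵢ*`, the
function `u ↦ Σᵢ ‖u u* − Xᵢ Xᵢ*‖_F²` attains its minimum over unit vectors, and a
unit vector `u` is a minimizer iff `u` is an eigenvector of `K` whose eigenvalue is
the largest eigenvalue of `K` (the VW extrinsic sample mean is the projective point
of such an eigenvector). -/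
theorem vw_extrinsic_sample_mean
    {N n : ℕ} (hN : 0 < N) (hn : 0 < n)
    (X : Fin n → EuclideanSpace ℂ (Fin N)) (hX : ∀ i, ‖X i‖ = 1)
    (K : Matrix (Fin N) (Fin N) ℂ)
    (hK : K = (n : ℂ)⁻¹ • ∑ i : Fin n, Matrix.of fun j k => X i j * conj (X i k))
    (f : EuclideanSpace ℂ (Fin N) → ℝ)
    (hf : f = fun u => ∑ i : Fin n, ∑ j : Fin N, ∑ k : Fin N,
      ‖u j * conj (u k) - X i j * conj (X i k)‖ ^ 2) :
    (∃ u : EuclideanSpace ℂ (Fin N), ‖u‖ = 1 ∧ ∀ v : EuclideanSpace ℂ (Fin N),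
        ‖v‖ = 1 → f u ≤ f v) ∧
      ∀ u : EuclideanSpace ℂ (Fin N), ‖u‖ = 1 →
        ((∀ v : EuclideanSpace ℂ (Fin N), ‖v‖ = 1 → f u ≤ f v) ↔
          ∃ η : ℝ, K.mulVec (fun j => u j) = (η : ℂ) • (fun j => u j) ∧
            ∀ ξ : ℝ, (∃ v : Fin N → ℂ, v ≠ 0 ∧ K.mulVec v = (ξ : ℂ) • v) → ξ ≤ η) := by
  set T := (n : ℂ)⁻¹ • ∑ i, InnerProductSpace.rankOne ℂ (X i) (X i)
  have hKT : Matrix.toEuclideanCLM (n := Fin N) (𝕜 := ℂ) K = T := by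
    simp only [hK, map_smul, map_sum, Matrix.toEuclideanCLM_of_mul_conj, T]
  have hT : IsSelfAdjoint T := (IsSelfAdjoint.natCast n).inv₀.smul <|
    isSelfAdjoint_sum _ fun i _ => (InnerProductSpace.isPositive_rankOne_self (X i)).isSelfAdjoint
  have hfT : ∀ u, ‖u‖ = 1 → f u = 2 * n * (1 - T.reApplyInnerSelf u) := by
    intro u hu
    have hTu : T.reApplyInnerSelf u = (n : ℝ)⁻¹ * ∑ i, ‖⟪X i, u⟫_ℂ‖ ^ 2 := by
      rw [← InnerProductSpace.reApplyInnerSelf_sum_rankOne_self]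
      simp [T, ContinuousLinearMap.reApplyInnerSelf_apply, inner_smul_left]
    simp only [hf, EuclideanSpace.sum_norm_sq_mul_conj_sub, hu, hX, hTu, Finset.sum_sub_distrib,
      ← Finset.mul_sum, Finset.sum_const, Finset.card_fin, nsmul_eq_mul]
    field_simp
    ring
  have hmin : ∀ u, ‖u‖ = 1 →
      ((∀ v, ‖v‖ = 1 → f u ≤ f v) ↔ IsMaxOn T.reApplyInnerSelf (sphere 0 1) u) := by
    intro u hu
    simp only [isMaxOn_iff, mem_sphere_zero_iff_norm]
    refine forall₂_congr fun v hv => ?_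
    rw [hfT u hu, hfT v hv, mul_le_mul_iff_right₀ (by positivity), sub_le_sub_iff_left]
  refine ⟨?_, fun u hu => ?_⟩
  · obtain ⟨w, hw, hw_max⟩ := T.exists_isMaxOn_reApplyInnerSelf_sphere
      ⟨EuclideanSpace.single ⟨0, hN⟩ 1, by simp⟩
    exact ⟨w, hw, (hmin w hw).mpr hw_max⟩
  rw [hmin u hu, hT.isMaxOn_sphere_iff hu, ← hKT]
  simp_rw [← Matrix.exists_mulVec_eq_smul_iff, Matrix.toEuclideanCLM_apply_eq_smul_iff]
  rfl
end

section
/- Let A be a real symmetric N×N matrix whose largest eigenvalue η is simple, with unit eigenvector v. Then v vᵀ is the unique nearest point of A in the set { u uᵀ : u ∈ ℝ^N, ‖u‖ = 1 } with respect to the Frobenius norm; equivalently, a unit vector u minimizes ‖A − u uᵀ‖_F if and only if u = v or u = −v. -/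
/-!
For a unit vector `u`, `‖A - u uᵀ‖_F² = ‖A‖_F² - 2 uᵀAu + 1`, so `u` is a nearest point exactly
when it maximizes the Rayleigh quotient `uᵀAu`. As `η` bounds every eigenvalue of `A`, the matrix
`η I - A` is positive semidefinite; hence `uᵀAu ≤ η = vᵀAv`, and equality forces
`(η I - A) u = 0`, so `u` is an `η`-eigenvector, i.e. `u = ±v` by simplicity of `η`.
-/

open Matrix WithLp

namespace Matrix

variable {n : Type*} [Fintype n]

theorem sum_sum_sub_mul_sq {R : Type*} [CommRing R] (A : Matrix n n R) (u : n → R) :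
    ∑ j, ∑ k, (A j k - u j * u k) ^ 2 =
      ∑ j, ∑ k, A j k ^ 2 - 2 * (u ⬝ᵥ A *ᵥ u) + (u ⬝ᵥ u) ^ 2 := by
  have h : ∀ j k, (A j k - u j * u k) ^ 2 =
      A j k ^ 2 - 2 * (u j * (A j k * u k)) + u j * u j * (u k * u k) := fun j k => by ring
  simp only [h, Finset.sum_add_distrib, Finset.sum_sub_distrib, ← Finset.mul_sum, dotProduct,
    mulVec, sq (∑ i, _), Finset.sum_mul_sum]

variable [DecidableEq n] {A : Matrix n n ℝ} {η : ℝ}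

theorem IsHermitian.posSemidef_smul_one_sub (hA : A.IsHermitian)
    (hη : ∀ ξ : ℝ, (∃ w : n → ℝ, w ≠ 0 ∧ A *ᵥ w = ξ • w) → ξ ≤ η) :
    (η • 1 - A).PosSemidef := by
  have hB : (η • 1 - A).IsHermitian := (isHermitian_one.smul (IsSelfAdjoint.all η)).sub hA
  refine hB.posSemidef_iff_eigenvalues_nonneg.2 fun i => ?_
  set e := ofLp (hB.eigenvectorBasis i)
  have he : e ≠ 0 := fun h0 => hB.eigenvectorBasis.orthonormal.ne_zero i (ofLp_injective 2 h0)
  have hAe : A *ᵥ e = (η - hB.eigenvalues i) • e := by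
    have hBe := hB.mulVec_eigenvectorBasis i
    rw [sub_mulVec, smul_mulVec, one_mulVec] at hBe
    rw [sub_smul, ← hBe, sub_sub_cancel]
  simpa using hη _ ⟨e, he, hAe⟩

theorem IsHermitian.dotProduct_mulVec_le (hA : A.IsHermitian)
    (hη : ∀ ξ : ℝ, (∃ w : n → ℝ, w ≠ 0 ∧ A *ᵥ w = ξ • w) → ξ ≤ η) (u : n → ℝ) :
    u ⬝ᵥ A *ᵥ u ≤ η * (u ⬝ᵥ u) := by
  have h := (hA.posSemidef_smul_one_sub hη).dotProduct_mulVec_nonneg u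
  simpa only [ge_iff_le, star_trivial, sub_mulVec, smul_mulVec, one_mulVec, dotProduct_sub,
    dotProduct_smul, smul_eq_mul, sub_nonneg] using h

theorem IsHermitian.mulVec_eq_smul_of_dotProduct_mulVec_eq (hA : A.IsHermitian)
    (hη : ∀ ξ : ℝ, (∃ w : n → ℝ, w ≠ 0 ∧ A *ᵥ w = ξ • w) → ξ ≤ η) {u : n → ℝ}
    (hu : u ⬝ᵥ A *ᵥ u = η * (u ⬝ᵥ u)) : A *ᵥ u = η • u := by
  have h : (η • 1 - A) *ᵥ u = 0 :=
    ((hA.posSemidef_smul_one_sub hη).dotProduct_mulVec_zero_iff u).1 (by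
      simp only [star_trivial, sub_mulVec, smul_mulVec, one_mulVec, dotProduct_sub,
        dotProduct_smul, smul_eq_mul, hu, sub_self])
  simpa only [sub_mulVec, smul_mulVec, one_mulVec, sub_eq_zero, eq_comm] using h

end Matrix

namespace EuclideanSpace

variable {n : Type*} [Fintype n]

theorem ofLp_dotProduct_ofLp_self (u : EuclideanSpace ℝ n) : ofLp u ⬝ᵥ ofLp u = ‖u‖ ^ 2 := by
  simpa only [inner_eq_star_dotProduct, star_trivial] using real_inner_self_eq_norm_sq u

theorem sqrt_sum_sum_sub_mul_sq_le_iff (A : Matrix n n ℝ) {u w : EuclideanSpace ℝ n}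
    (hu : ‖u‖ = 1) (hw : ‖w‖ = 1) :
    √(∑ j, ∑ k, (A j k - u j * u k) ^ 2) ≤ √(∑ j, ∑ k, (A j k - w j * w k) ^ 2) ↔
      ofLp w ⬝ᵥ A *ᵥ ofLp w ≤ ofLp u ⬝ᵥ A *ᵥ ofLp u := by
  rw [Real.sqrt_le_sqrt_iff (by positivity), sum_sum_sub_mul_sq, sum_sum_sub_mul_sq,
    ofLp_dotProduct_ofLp_self, ofLp_dotProduct_ofLp_self, hu, hw]
  constructor <;> intro h <;> linarith

end EuclideanSpace

theorem eq_or_eq_neg_of_eq_smul_of_norm_eq_one {E : Type*} [NormedAddCommGroup E]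
    [NormedSpace ℝ E] {u v : E} {c : ℝ} (hu : ‖u‖ = 1) (hv : ‖v‖ = 1) (h : u = c • v) :
    u = v ∨ u = -v := by
  rw [h, norm_smul, hv, mul_one, Real.norm_eq_abs] at hu
  rcases abs_eq_abs.1 (hu.trans abs_one.symm) with rfl | rfl <;> simp [h]

open EuclideanSpace in
/-- Let `A` be a real symmetric `N×N` matrix whose largest eigenvalue
`η` is simple, with unit eigenvector `v`.  Then `v vᵀ` is the unique nearest point of
`A` in `{u uᵀ : ‖u‖ = 1}` for the Frobenius norm: a unit vector `u` minimizes
`‖A − u uᵀ‖_F` iff `u = v` or `u = -v`. -/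
theorem nearest_rank_one_projection
    {N : ℕ} (A : Matrix (Fin N) (Fin N) ℝ) (hA : A.IsSymm)
    (η : ℝ) (v : EuclideanSpace ℝ (Fin N)) (hv : ‖v‖ = 1)
    (hev : A.mulVec (fun j => v j) = η • (fun j => v j))
    (htop : ∀ ξ : ℝ, (∃ w : Fin N → ℝ, w ≠ 0 ∧ A.mulVec w = ξ • w) → ξ ≤ η)
    (hsimple : ∀ w : Fin N → ℝ, A.mulVec w = η • w → ∃ c : ℝ, w = c • (fun j => v j)) :
    (∀ u : EuclideanSpace ℝ (Fin N), ‖u‖ = 1 →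
        Real.sqrt (∑ j : Fin N, ∑ k : Fin N, (A j k - v j * v k) ^ 2) ≤
          Real.sqrt (∑ j : Fin N, ∑ k : Fin N, (A j k - u j * u k) ^ 2)) ∧
      ∀ u : EuclideanSpace ℝ (Fin N), ‖u‖ = 1 →
        ((∀ w : EuclideanSpace ℝ (Fin N), ‖w‖ = 1 →
            Real.sqrt (∑ j : Fin N, ∑ k : Fin N, (A j k - u j * u k) ^ 2) ≤
              Real.sqrt (∑ j : Fin N, ∑ k : Fin N, (A j k - w j * w k) ^ 2)) ↔
          (u = v ∨ u = -v)) := by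
  have hH : A.IsHermitian := isHermitian_iff_isSelfAdjoint.2 hA
  have hunit {u : EuclideanSpace ℝ (Fin N)} (hu : ‖u‖ = 1) : ofLp u ⬝ᵥ ofLp u = 1 := by
    rw [ofLp_dotProduct_ofLp_self, hu, one_pow]
  have hle {u : EuclideanSpace ℝ (Fin N)} (hu : ‖u‖ = 1) : ofLp u ⬝ᵥ A *ᵥ ofLp u ≤ η :=
    (hH.dotProduct_mulVec_le htop _).trans_eq (by rw [hunit hu, mul_one])
  have hvη : ofLp v ⬝ᵥ A *ᵥ ofLp v = η := by
    rw [hev, dotProduct_smul, hunit hv, smul_eq_mul, mul_one]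
  refine ⟨fun u hu => (sqrt_sum_sum_sub_mul_sq_le_iff A hv hu).2 (hvη ▸ hle hu),
    fun u hu => ⟨fun hmin => ?_, ?_⟩⟩
  · have huη : ofLp u ⬝ᵥ A *ᵥ ofLp u = η * (ofLp u ⬝ᵥ ofLp u) := by
      rw [hunit hu, mul_one]
      exact (hle hu).antisymm (hvη ▸ (sqrt_sum_sum_sub_mul_sq_le_iff A hu hv).1 (hmin v hv))
    obtain ⟨c, hc⟩ := hsimple _ (hH.mulVec_eq_smul_of_dotProduct_mulVec_eq htop huη)
    exact eq_or_eq_neg_of_eq_smul_of_norm_eq_one hu hv (ofLp_injective 2 hc)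
  · rintro huv w hw
    refine (sqrt_sum_sum_sub_mul_sq_le_iff A hu hw).2 ?_
    rcases huv with rfl | rfl
    · exact hvη ▸ hle hw
    · simpa only [ofLp_neg, mulVec_neg, dotProduct_neg, neg_dotProduct, hvη, neg_neg] using hle hw
end
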